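/- Let A, B be real N×N matrices such that B + Bᵀ is positive definite, with b := λ_min((B+Bᵀ)/2) > 0, and let g : [0,∞) → ℝ^N be continuous. Fix t > 0 and z > 0. Then the iterated integral I₂ := ∫_0^∞ ( ∫_0^t exp((A − ω²B)(t−s)) B g(s) cos(ωz) ds ) dω is absolutely convergent, and ‖I₂‖ ≤ (√π ‖B‖ / (2√b)) · ∫_0^t ‖g(s)‖ e^{μ(A)(t−s)} / √(t−s) ds < ∞. -/

import Mathlib

open MeasureTheory Filter Matrix NormedSpace

/-- The largest eigenvalue of a real symmetric matrix (junk value `0` otherwise). -/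
noncomputable def lambdaMax {N : ℕ} (S : Matrix (Fin N) (Fin N) ℝ) : ℝ :=
  if h : S.IsHermitian then ⨆ i, h.eigenvalues i else 0

/-- The smallest eigenvalue of a real symmetric matrix (junk value `0` otherwise). -/
noncomputable def lambdaMin {N : ℕ} (S : Matrix (Fin N) (Fin N) ℝ) : ℝ :=
  if h : S.IsHermitian then ⨅ i, h.eigenvalues i else 0

/-- The logarithmic norm `μ(P) = λ_max((P + Pᵀ)/2)` of a real square matrix. -/
noncomputable def logNorm {N : ℕ} (P : Matrix (Fin N) (Fin N) ℝ) : ℝ :=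
  lambdaMax ((1 / 2 : ℝ) • (P + Pᵀ))

/-- The action of a real `N × N` matrix on the Euclidean space `ℝ^N`. -/
noncomputable def matAct {N : ℕ} (M : Matrix (Fin N) (Fin N) ℝ)
    (v : EuclideanSpace ℝ (Fin N)) : EuclideanSpace ℝ (Fin N) :=
  Matrix.toEuclideanLin M v

/-- The operator norm of a real `N × N` matrix, induced by the Euclidean norm on `ℝ^N`. -/
noncomputable def matOpNorm {N : ℕ} (M : Matrix (Fin N) (Fin N) ℝ) : ℝ :=
  ‖LinearMap.toContinuousLinearMap (Matrix.toEuclideanLin M)‖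

/-- The complementary error function `erfc x = (2/√π) ∫_x^∞ e^{-u²} du`. -/
noncomputable def erfc (x : ℝ) : ℝ :=
  (2 / Real.sqrt Real.pi) * ∫ u in Set.Ioi x, Real.exp (-u ^ 2)

open scoped RealInnerProductSpace
set_option maxHeartbeats 1000000

section Aux
variable {N : ℕ}




lemma matAct_eq_clm (M : Matrix (Fin N) (Fin N) ℝ) (v : EuclideanSpace ℝ (Fin N)) :
    matAct M v = Matrix.toEuclideanCLM (𝕜 := ℝ) M v := rfl

lemma matAct_mul (M P : Matrix (Fin N) (Fin N) ℝ) (v : EuclideanSpace ℝ (Fin N)) :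
    matAct (M * P) v = matAct M (matAct P v) := by
  simp [matAct_eq_clm, _root_.map_mul]

lemma inner_matAct (M : Matrix (Fin N) (Fin N) ℝ) (v w : EuclideanSpace ℝ (Fin N)) :
    ⟪matAct M v, w⟫ = ⟪v, matAct Mᵀ w⟫ := by
  simp only [matAct, Matrix.toEuclideanLin_apply, PiLp.inner_apply, RCLike.inner_apply,
    starRingEnd_apply, star_trivial, PiLp.toLp_apply, Matrix.mulVec,
    dotProduct, Matrix.transpose_apply]
  simp_rw [Finset.sum_mul, Finset.mul_sum]
  rw [Finset.sum_comm]
  congr 1; ext i; congr 1; ext j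
  have : (WithLp.equiv 2 (Fin N → ℝ)) v j = v j := rfl
  ring_nf

lemma matAct_eigen {S : Matrix (Fin N) (Fin N) ℝ} (hS : S.IsHermitian) (i : Fin N) :
    matAct S (hS.eigenvectorBasis i) = hS.eigenvalues i • hS.eigenvectorBasis i := by
  apply PiLp.ext
  intro j
  have := congrFun (hS.mulVec_eigenvectorBasis i) j
  simpa [matAct, Matrix.toEuclideanLin_apply] using this

lemma quad_eq_sum {S : Matrix (Fin N) (Fin N) ℝ} (hS : S.IsHermitian)
    (u : EuclideanSpace ℝ (Fin N)) :
    ⟪matAct S u, u⟫ = ∑ i, hS.eigenvalues i * ⟪u, hS.eigenvectorBasis i⟫ ^ 2 := by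
  have h1 := (hS.eigenvectorBasis).sum_inner_mul_inner (matAct S u) u
  rw [← h1]
  congr 1; ext i
  have hTS : Sᵀ = S := by
    rw [← Matrix.conjTranspose_eq_transpose_of_trivial]; exact hS
  have h2 : ⟪matAct S u, hS.eigenvectorBasis i⟫
      = hS.eigenvalues i * ⟪u, hS.eigenvectorBasis i⟫ := by
    rw [inner_matAct, hTS, matAct_eigen hS i, real_inner_smul_right]
  rw [h2, real_inner_comm (hS.eigenvectorBasis i) u]
  ring

lemma norm_sq_eq_sum {S : Matrix (Fin N) (Fin N) ℝ} (hS : S.IsHermitian)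
    (u : EuclideanSpace ℝ (Fin N)) :
    ‖u‖ ^ 2 = ∑ i, ⟪u, hS.eigenvectorBasis i⟫ ^ 2 := by
  have h1 := (hS.eigenvectorBasis).sum_inner_mul_inner u u
  rw [← real_inner_self_eq_norm_sq, ← h1]
  congr 1; ext i
  rw [real_inner_comm (hS.eigenvectorBasis i) u]; ring

lemma rayleigh_le {S : Matrix (Fin N) (Fin N) ℝ} (hS : S.IsHermitian)
    (u : EuclideanSpace ℝ (Fin N)) :
    ⟪matAct S u, u⟫ ≤ lambdaMax S * ‖u‖ ^ 2 := by
  rcases Nat.eq_zero_or_pos N with hN | hN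
  · subst hN
    have : u = 0 := Subsingleton.elim u 0
    simp [this]
  · have : Nonempty (Fin N) := ⟨⟨0, hN⟩⟩
    rw [quad_eq_sum hS u, norm_sq_eq_sum hS u, lambdaMax, dif_pos hS, Finset.mul_sum]
    apply Finset.sum_le_sum
    intro i _
    have hle : hS.eigenvalues i ≤ ⨆ j, hS.eigenvalues j :=
      le_ciSup (Set.Finite.bddAbove (Set.finite_range _)) i
    nlinarith [sq_nonneg (⟪u, hS.eigenvectorBasis i⟫)]

lemma rayleigh_ge {S : Matrix (Fin N) (Fin N) ℝ} (hS : S.IsHermitian)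
    (u : EuclideanSpace ℝ (Fin N)) :
    lambdaMin S * ‖u‖ ^ 2 ≤ ⟪matAct S u, u⟫ := by
  rcases Nat.eq_zero_or_pos N with hN | hN
  · subst hN
    have : u = 0 := Subsingleton.elim u 0
    simp [this]
  · have : Nonempty (Fin N) := ⟨⟨0, hN⟩⟩
    rw [quad_eq_sum hS u, norm_sq_eq_sum hS u, lambdaMin, dif_pos hS, Finset.mul_sum]
    apply Finset.sum_le_sum
    intro i _
    have hle : (⨅ j, hS.eigenvalues j) ≤ hS.eigenvalues i :=
      ciInf_le (Set.Finite.bddBelow (Set.finite_range _)) i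
    nlinarith [sq_nonneg (⟪u, hS.eigenvectorBasis i⟫)]

noncomputable def cmL {N : ℕ} : Matrix (Fin N) (Fin N) ℝ →ₗ[ℝ]
    (EuclideanSpace ℝ (Fin N) →L[ℝ] EuclideanSpace ℝ (Fin N)) :=
  { toFun := fun M => Matrix.toEuclideanCLM (𝕜 := ℝ) M,
    map_add' := by intros; simp,
    map_smul' := by intros; simp }

set_option maxHeartbeats 2000000 in
lemma cm_exp (P : Matrix (Fin N) (Fin N) ℝ) :
    Matrix.toEuclideanCLM (𝕜 := ℝ) (exp P) = exp (Matrix.toEuclideanCLM (𝕜 := ℝ) P) := by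
  letI : SeminormedRing (Matrix (Fin N) (Fin N) ℝ) := Matrix.linftyOpSemiNormedRing
  letI : NormedRing (Matrix (Fin N) (Fin N) ℝ) := Matrix.linftyOpNormedRing
  letI : NormedAlgebra ℝ (Matrix (Fin N) (Fin N) ℝ) := Matrix.linftyOpNormedAlgebra
  letI : NormedAlgebra ℚ (Matrix (Fin N) (Fin N) ℝ) := NormedAlgebra.restrictScalars ℚ ℝ _
  exact map_exp (Matrix.toEuclideanCLM (𝕜 := ℝ))
    ((cmL (N := N)).continuous_of_finiteDimensional) P

lemma matAct_one (v : EuclideanSpace ℝ (Fin N)) : matAct 1 v = v := by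
  rw [matAct_eq_clm, _root_.map_one]; rfl

lemma hasDerivAt_matexp (P : Matrix (Fin N) (Fin N) ℝ) (x : EuclideanSpace ℝ (Fin N)) (τ : ℝ) :
    HasDerivAt (fun σ => matAct (exp (σ • P)) x)
      (matAct P (matAct (exp (τ • P)) x)) τ := by
  set T := Matrix.toEuclideanCLM (𝕜 := ℝ) P with hT
  have key : ∀ σ : ℝ, matAct (exp (σ • P)) x = (exp (σ • T)) x := by
    intro σ
    rw [matAct_eq_clm, cm_exp, _root_.map_smul]
  have h1 : HasDerivAt (fun σ : ℝ => exp (σ • T)) (T * exp (τ • T)) τ :=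
    hasDerivAt_exp_smul_const' T τ
  have h2 := ((ContinuousLinearMap.apply ℝ (EuclideanSpace ℝ (Fin N)) x).hasFDerivAt).comp_hasDerivAt τ h1
  have h3 : HasDerivAt (fun σ : ℝ => (exp (σ • T)) x) ((T * exp (τ • T)) x) τ := h2
  have h4 : (T * exp (τ • T)) x = matAct P (matAct (exp (τ • P)) x) := by
    rw [matAct_eq_clm, matAct_eq_clm, cm_exp, _root_.map_smul, ContinuousLinearMap.mul_apply]
  rw [← h4]
  simpa only [key] using h3

lemma norm_matAct_exp_le (P : Matrix (Fin N) (Fin N) ℝ) (c : ℝ)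
    (hc : ∀ u : EuclideanSpace ℝ (Fin N), ⟪matAct P u, u⟫ ≤ c * ‖u‖ ^ 2)
    {τ : ℝ} (hτ : 0 ≤ τ) (x : EuclideanSpace ℝ (Fin N)) :
    ‖matAct (exp (τ • P)) x‖ ≤ Real.exp (c * τ) * ‖x‖ := by
  set f : ℝ → EuclideanSpace ℝ (Fin N) := fun σ => matAct (exp (σ • P)) x with hf
  have hfd : ∀ σ, HasDerivAt f (matAct P (f σ)) σ := fun σ => hasDerivAt_matexp P x σ
  set φ : ℝ → ℝ := fun σ => Real.exp (-(2*c)*σ) * ⟪f σ, f σ⟫ with hφ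
  have hφd : ∀ σ, HasDerivAt φ
      (Real.exp (-(2*c)*σ) * (-(2*c) * ⟪f σ, f σ⟫ + 2 * ⟪matAct P (f σ), f σ⟫)) σ := by
    intro σ
    have h1 : HasDerivAt (fun σ => Real.exp (-(2*c)*σ)) (-(2*c) * Real.exp (-(2*c)*σ)) σ := by
      simpa [mul_comm, mul_assoc, mul_left_comm] using
        ((hasDerivAt_id σ).const_mul (-(2*c))).exp
    have h2 : HasDerivAt (fun σ => (⟪f σ, f σ⟫ : ℝ))
        (⟪f σ, matAct P (f σ)⟫ + ⟪matAct P (f σ), f σ⟫) σ :=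
      (hfd σ).inner ℝ (hfd σ)
    have := h1.mul h2
    refine this.congr_deriv ?_
    rw [real_inner_comm (f σ) (matAct P (f σ))]
    ring
  have hanti : Antitone φ := by
    apply antitone_of_deriv_nonpos
    · intro σ; exact (hφd σ).differentiableAt
    · intro σ
      rw [(hφd σ).deriv]
      have h5 : ⟪matAct P (f σ), f σ⟫ ≤ c * ⟪f σ, f σ⟫ := by
        have := hc (f σ); rwa [real_inner_self_eq_norm_sq]
      have h6 : (0:ℝ) < Real.exp (-(2*c)*σ) := Real.exp_pos _
      nlinarith
  have h0 : φ 0 = ‖x‖ ^ 2 := by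
    simp only [hφ, hf, zero_smul, exp_zero, matAct_one, mul_zero, neg_zero, Real.exp_zero,
      one_mul, real_inner_self_eq_norm_sq]
  have hτ0 : φ τ ≤ ‖x‖ ^ 2 := h0 ▸ hanti hτ
  have hkey : ‖f τ‖ ^ 2 ≤ (Real.exp (c*τ) * ‖x‖) ^ 2 := by
    have he : Real.exp (-(2*c)*τ) * (Real.exp (c*τ))^2 = 1 := by
      rw [sq, ← Real.exp_add, ← Real.exp_add]; ring_nf; exact Real.exp_zero
    have h7 : (0:ℝ) < Real.exp (-(2*c)*τ) := Real.exp_pos _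
    have := hτ0
    rw [hφ] at this
    simp only at this
    rw [real_inner_self_eq_norm_sq] at this
    nlinarith [sq_nonneg (‖x‖ * Real.exp (c*τ)), Real.exp_pos (c*τ), norm_nonneg x]
  have h8 : (0:ℝ) ≤ Real.exp (c*τ) * ‖x‖ := by positivity
  nlinarith [norm_nonneg (f τ)]

lemma symPart_isHermitian (P : Matrix (Fin N) (Fin N) ℝ) :
    ((1 / 2 : ℝ) • (P + Pᵀ)).IsHermitian := by
  unfold Matrix.IsHermitian
  rw [Matrix.conjTranspose_eq_transpose_of_trivial, Matrix.transpose_smul, Matrix.transpose_add,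
    Matrix.transpose_transpose, add_comm]

lemma matAct_add (M P : Matrix (Fin N) (Fin N) ℝ) (v : EuclideanSpace ℝ (Fin N)) :
    matAct (M + P) v = matAct M v + matAct P v := by
  simp [matAct, _root_.map_add]

lemma matAct_sub (M P : Matrix (Fin N) (Fin N) ℝ) (v : EuclideanSpace ℝ (Fin N)) :
    matAct (M - P) v = matAct M v - matAct P v := by
  simp [matAct, _root_.map_sub]

lemma matAct_smul (r : ℝ) (M : Matrix (Fin N) (Fin N) ℝ) (v : EuclideanSpace ℝ (Fin N)) :
    matAct (r • M) v = r • matAct M v := by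
  simp [matAct, _root_.map_smul]

lemma inner_symPart (P : Matrix (Fin N) (Fin N) ℝ) (u : EuclideanSpace ℝ (Fin N)) :
    ⟪matAct ((1 / 2 : ℝ) • (P + Pᵀ)) u, u⟫ = ⟪matAct P u, u⟫ := by
  rw [matAct_smul, matAct_add, real_inner_smul_left, inner_add_left]
  have h1 : ⟪matAct Pᵀ u, u⟫ = ⟪matAct P u, u⟫ := by
    rw [inner_matAct, Matrix.transpose_transpose, real_inner_comm]
  rw [h1]; ring

lemma quad_le_logNorm (P : Matrix (Fin N) (Fin N) ℝ) (u : EuclideanSpace ℝ (Fin N)) :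
    ⟪matAct P u, u⟫ ≤ logNorm P * ‖u‖ ^ 2 := by
  rw [← inner_symPart P u]
  exact rayleigh_le (symPart_isHermitian P) u

lemma quad_ge_lambdaMin (P : Matrix (Fin N) (Fin N) ℝ) (u : EuclideanSpace ℝ (Fin N)) :
    lambdaMin ((1 / 2 : ℝ) • (P + Pᵀ)) * ‖u‖ ^ 2 ≤ ⟪matAct P u, u⟫ := by
  rw [← inner_symPart P u]
  exact rayleigh_ge (symPart_isHermitian P) u

lemma norm_exp_bound (A B : Matrix (Fin N) (Fin N) ℝ) (b : ℝ)
    (hb : ∀ u : EuclideanSpace ℝ (Fin N), b * ‖u‖ ^ 2 ≤ ⟪matAct B u, u⟫)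
    (ω : ℝ) {τ : ℝ} (hτ : 0 ≤ τ) (x : EuclideanSpace ℝ (Fin N)) :
    ‖matAct (exp (τ • (A - ω ^ 2 • B))) x‖
      ≤ Real.exp ((logNorm A - ω ^ 2 * b) * τ) * ‖x‖ := by
  apply norm_matAct_exp_le _ _ _ hτ
  intro u
  rw [matAct_sub, matAct_smul, inner_sub_left, real_inner_smul_left]
  have h1 := quad_le_logNorm A u
  have h2 := hb u
  nlinarith [sq_nonneg ω]

lemma norm_matAct_le (M : Matrix (Fin N) (Fin N) ℝ) (v : EuclideanSpace ℝ (Fin N)) :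
    ‖matAct M v‖ ≤ matOpNorm M * ‖v‖ :=
  (LinearMap.toContinuousLinearMap (Matrix.toEuclideanLin M)).le_opNorm v

lemma continuous_matexp_apply {α : Type*} [TopologicalSpace α]
    (m : α → Matrix (Fin N) (Fin N) ℝ) (v : α → EuclideanSpace ℝ (Fin N))
    (hm : Continuous m) (hv : Continuous v) :
    Continuous (fun p => matAct (exp (m p)) (v p)) := by
  have heq : ∀ p, matAct (exp (m p)) (v p)
      = (exp (Matrix.toEuclideanCLM (𝕜 := ℝ) (m p))) (v p) := by
    intro p; rw [matAct_eq_clm, cm_exp]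
  simp only [heq]
  have hcm : Continuous fun M : Matrix (Fin N) (Fin N) ℝ => Matrix.toEuclideanCLM (𝕜 := ℝ) M :=
    (cmL (N := N)).continuous_of_finiteDimensional
  letI : NormedAlgebra ℚ (EuclideanSpace ℝ (Fin N) →L[ℝ] EuclideanSpace ℝ (Fin N)) :=
    NormedAlgebra.restrictScalars ℚ ℝ _
  have h1 : Continuous fun p => exp (Matrix.toEuclideanCLM (𝕜 := ℝ) (m p)) :=
    exp_continuous.comp (hcm.comp hm)
  exact isBoundedBilinearMap_apply.continuous.comp (h1.prodMk hv)

end Aux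

theorem stmt7 {N : ℕ} (A B : Matrix (Fin N) (Fin N) ℝ)
    (hBpd : (B + Bᵀ).PosDef)
    (b : ℝ) (hb : b = lambdaMin ((1 / 2 : ℝ) • (B + Bᵀ))) (hbpos : 0 < b)
    (g : ℝ → EuclideanSpace ℝ (Fin N)) (hg : ContinuousOn g (Set.Ici 0))
    (t z : ℝ) (ht : 0 < t) (hz : 0 < z) :
    IntegrableOn
        (fun ω => ∫ s in (0 : ℝ)..t,
          Real.cos (ω * z) • matAct (NormedSpace.exp ((t - s) • (A - ω ^ 2 • B))) (matAct B (g s)))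
        (Set.Ioi 0)
    ∧ IntegrableOn
        (fun s => ‖g s‖ * Real.exp (logNorm A * (t - s)) / Real.sqrt (t - s))
        (Set.Ioc 0 t)
    ∧ ‖∫ ω in Set.Ioi (0 : ℝ), ∫ s in (0 : ℝ)..t,
          Real.cos (ω * z) • matAct (NormedSpace.exp ((t - s) • (A - ω ^ 2 • B))) (matAct B (g s))‖
        ≤ Real.sqrt Real.pi * matOpNorm B / (2 * Real.sqrt b) *
            ∫ s in (0 : ℝ)..t, ‖g s‖ * Real.exp (logNorm A * (t - s)) / Real.sqrt (t - s) := by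
  classical
  have hsqb : (0:ℝ) < Real.sqrt b := Real.sqrt_pos.mpr hbpos
  set G : ℝ → EuclideanSpace ℝ (Fin N) := fun s => g (max s 0) with hGdef
  have hG : Continuous G :=
    hg.comp_continuous (continuous_id.max continuous_const) (fun x => Set.mem_Ici.mpr (le_max_right _ _))
  have hGg : ∀ s : ℝ, 0 ≤ s → G s = g s := fun s hs => by simp [hGdef, max_eq_left hs]
  have hbB : ∀ u : EuclideanSpace ℝ (Fin N), b * ‖u‖ ^ 2 ≤ ⟪matAct B u, u⟫ := by
    intro u; rw [hb]; exact quad_ge_lambdaMin B u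
  set K : ℝ → ℝ := fun s => ‖G s‖ * Real.exp (logNorm A * (t - s)) with hKdef
  have hK : Continuous K := (hG.norm).mul
    (Real.continuous_exp.comp (continuous_const.mul (continuous_const.sub continuous_id)))
  have hKnn : ∀ s, 0 ≤ K s := fun s => mul_nonneg (norm_nonneg _) (Real.exp_pos _).le
  set H : ℝ × ℝ → EuclideanSpace ℝ (Fin N) := fun p =>
    Real.cos (p.1 * z) • matAct (exp ((t - p.2) • (A - p.1 ^ 2 • B))) (matAct B (G p.2))
    with hHdef
  have hHc : Continuous H := by
    apply Continuous.fun_smul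
    · exact Real.continuous_cos.comp (continuous_fst.mul continuous_const)
    · apply continuous_matexp_apply
      · exact (continuous_const.sub continuous_snd).smul
          (continuous_const.sub ((continuous_fst.pow 2).smul continuous_const))
      · exact (Matrix.toEuclideanCLM (𝕜 := ℝ) B).continuous.comp (hG.comp continuous_snd)
  set D : ℝ × ℝ → ℝ := fun p => matOpNorm B * K p.2 * Real.exp (-(b * (t - p.2)) * p.1 ^ 2)
    with hDdef
  have hDc : Continuous D := (continuous_const.mul (hK.comp continuous_snd)).mul
    (Real.continuous_exp.comp
      (((continuous_const.mul (continuous_const.sub continuous_snd)).neg).mul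
        (continuous_fst.pow 2)))
  have hDnn : ∀ p, 0 ≤ D p :=
    fun p => mul_nonneg (mul_nonneg (norm_nonneg _) (hKnn _)) (Real.exp_pos _).le
  -- pointwise bound
  have hHD : ∀ (ω : ℝ) {s : ℝ}, s ∈ Set.Icc 0 t → ‖H (ω, s)‖ ≤ D (ω, s) := by
    intro ω s hs
    have hτ : 0 ≤ t - s := sub_nonneg.mpr hs.2
    have h1 : ‖H (ω, s)‖ ≤ ‖matAct (exp ((t - s) • (A - ω ^ 2 • B))) (matAct B (G s))‖ := by
      rw [hHdef]; simp only [norm_smul, Real.norm_eq_abs]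
      exact mul_le_of_le_one_left (norm_nonneg _) (Real.abs_cos_le_one _)
    have h2 := norm_exp_bound A B b hbB ω hτ (matAct B (G s))
    have h3 : ‖matAct B (G s)‖ ≤ matOpNorm B * ‖G s‖ := norm_matAct_le B (G s)
    have h4 : Real.exp ((logNorm A - ω ^ 2 * b) * (t - s))
        = Real.exp (logNorm A * (t - s)) * Real.exp (-(b * (t - s)) * ω ^ 2) := by
      rw [← Real.exp_add]; ring_nf
    calc ‖H (ω, s)‖ ≤ _ := h1
      _ ≤ Real.exp ((logNorm A - ω ^ 2 * b) * (t - s)) * ‖matAct B (G s)‖ := h2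
      _ ≤ Real.exp ((logNorm A - ω ^ 2 * b) * (t - s)) * (matOpNorm B * ‖G s‖) :=
          mul_le_mul_of_nonneg_left h3 (Real.exp_pos _).le
      _ = D (ω, s) := by rw [hDdef, hKdef, h4]; ring
  have hDsec : ∀ ω : ℝ, IntegrableOn (fun s => D (ω, s)) (Set.Ioc 0 t) := fun ω =>
    (hDc.comp (continuous_const.prodMk continuous_id)).integrableOn_Ioc
  -- integrability of s ↦ (t-s)^(-1/2) on Ioc 0 t
  have h_rpow_int : IntegrableOn (fun s : ℝ => (t - s) ^ (-(1/2) : ℝ)) (Set.Ioc 0 t) := by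
    have h1 : IntervalIntegrable (fun x : ℝ => x ^ (-(1/2) : ℝ)) volume 0 t :=
      intervalIntegral.intervalIntegrable_rpow' (by norm_num)
    have h2 := (h1.comp_sub_left t).symm
    simp only [sub_zero, sub_self] at h2
    exact (intervalIntegrable_iff_integrableOn_Ioc_of_le ht.le).mp h2
  -- integrability of K s / sqrt (t - s)
  have hsqrtmeas : Measurable fun s : ℝ => Real.sqrt (t - s) :=
    (Real.continuous_sqrt.comp (continuous_const.sub continuous_id)).measurable
  have P2' : IntegrableOn (fun s => K s / Real.sqrt (t - s)) (Set.Ioc 0 t) := by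
    obtain ⟨C, hC⟩ := isCompact_Icc.exists_bound_of_continuousOn
      (hK.continuousOn (s := Set.Icc (0:ℝ) t))
    refine Integrable.mono' (h_rpow_int.const_mul C)
      ((hK.measurable.div hsqrtmeas).aestronglyMeasurable) ?_
    filter_upwards [ae_restrict_mem measurableSet_Ioc] with s hs
    have hnn : 0 ≤ K s / Real.sqrt (t - s) := div_nonneg (hKnn s) (Real.sqrt_nonneg _)
    rw [Real.norm_of_nonneg hnn]
    rcases eq_or_lt_of_le hs.2 with hst | hst
    · rw [hst, sub_self, Real.sqrt_zero, div_zero, Real.zero_rpow (by norm_num), mul_zero]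
    · have h0 : 0 < t - s := sub_pos.mpr hst
      have hKC : K s ≤ C := le_trans (le_abs_self _) (hC s ⟨hs.1.le, hs.2⟩)
      rw [Real.sqrt_eq_rpow, div_le_iff₀ (by positivity)]
      rw [mul_assoc, ← Real.rpow_add h0]
      norm_num
      exact hKC
  -- conjunct 2
  have conj2 : IntegrableOn
      (fun s => ‖g s‖ * Real.exp (logNorm A * (t - s)) / Real.sqrt (t - s))
      (Set.Ioc 0 t) := by
    refine P2'.congr_fun ?_ measurableSet_Ioc
    intro s hs
    simp only [hKdef, hGg s hs.1.le]
  -- gaussian integral identity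
  have heq : ∀ s ∈ Set.Ioc (0:ℝ) t, (∫ ω in Set.Ioi (0:ℝ), D (ω, s))
      = Real.sqrt Real.pi * matOpNorm B / (2 * Real.sqrt b) * (K s / Real.sqrt (t - s)) := by
    intro s hs
    have hτ : 0 ≤ t - s := sub_nonneg.mpr hs.2
    have h1 : (∫ ω in Set.Ioi (0:ℝ), D (ω, s))
        = matOpNorm B * K s * ∫ ω in Set.Ioi (0:ℝ), Real.exp (-(b * (t - s)) * ω ^ 2) := by
      rw [← integral_const_mul]
    rw [h1, integral_gaussian_Ioi]
    have hsqrt : Real.sqrt (Real.pi / (b * (t - s))) / 2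
        = Real.sqrt Real.pi / (2 * Real.sqrt b) * (1 / Real.sqrt (t - s)) := by
      rw [show Real.pi / (b * (t - s)) = Real.pi / b / (t - s) by rw [div_div],
        Real.sqrt_div (by positivity) (t - s), Real.sqrt_div Real.pi_pos.le b]
      rw [div_div, div_div, div_mul_div_comm, mul_one]
      congr 1
      ring
    rw [hsqrt]
    ring
  -- product integrability of D
  have hDprod : Integrable (Function.uncurry fun ω s => D (ω, s))
      ((volume.restrict (Set.Ioi (0:ℝ))).prod (volume.restrict (Set.Ioc (0:ℝ) t))) := by
    refine (integrable_prod_iff' (by exact hDc.aestronglyMeasurable)).mpr ⟨?_, ?_⟩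
    · have hae : ∀ᵐ s ∂(volume.restrict (Set.Ioc (0:ℝ) t)), s ∈ Set.Ioo 0 t := by
        have h1 : ∀ᵐ s ∂(volume.restrict (Set.Ioc (0:ℝ) t)), s ∈ Set.Ioc 0 t :=
          ae_restrict_mem measurableSet_Ioc
        have h2 : ∀ᵐ s : ℝ ∂(volume.restrict (Set.Ioc (0:ℝ) t)), s ≠ t := by
          refine ae_restrict_of_ae ?_
          rw [ae_iff]
          have hset : {x : ℝ | ¬ x ≠ t} = {t} := by ext x; simp
          rw [hset]
          exact measure_singleton t
        filter_upwards [h1, h2] with s hs1 hs2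
        exact ⟨hs1.1, lt_of_le_of_ne hs1.2 hs2⟩
      filter_upwards [hae] with s hs
      have hc : 0 < b * (t - s) := mul_pos hbpos (sub_pos.mpr hs.2)
      have h3 := ((integrable_exp_neg_mul_sq hc).restrict
        (s := Set.Ioi (0:ℝ))).const_mul (matOpNorm B * K s)
      exact h3
    · refine IntegrableOn.congr_fun
        (P2'.const_mul (Real.sqrt Real.pi * matOpNorm B / (2 * Real.sqrt b))) ?_
        measurableSet_Ioc
      intro s hs
      simp only [Function.uncurry_apply_pair]
      have h4 : (∫ ω in Set.Ioi (0:ℝ), ‖D (ω, s)‖) = ∫ ω in Set.Ioi (0:ℝ), D (ω, s) :=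
        integral_congr_ae (Eventually.of_forall fun ω => Real.norm_of_nonneg (hDnn _))
      rw [h4, heq s hs]
  -- Phi
  set Φ : ℝ → EuclideanSpace ℝ (Fin N) := fun ω => ∫ s in (0:ℝ)..t, H (ω, s) with hΦdef
  have hΦeq : (fun ω => ∫ s in (0 : ℝ)..t,
      Real.cos (ω * z) • matAct (exp ((t - s) • (A - ω ^ 2 • B))) (matAct B (g s))) = Φ := by
    funext ω
    apply intervalIntegral.integral_congr
    intro s hs
    rw [Set.uIcc_of_le ht.le] at hs
    simp only [hHdef, hGg s hs.1]
  have hΦc : Continuous Φ := by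
    have h1 : Continuous fun ω : ℝ => ∫ s in Set.Icc (0:ℝ) t, H (ω, s) :=
      continuous_parametric_integral_of_continuous (by exact hHc) isCompact_Icc
    have h2 : Φ = fun ω : ℝ => ∫ s in Set.Icc (0:ℝ) t, H (ω, s) := by
      funext ω
      show (∫ s in (0:ℝ)..t, H (ω, s)) = ∫ s in Set.Icc (0:ℝ) t, H (ω, s)
      rw [intervalIntegral.integral_of_le ht.le, ← integral_Icc_eq_integral_Ioc]
    rw [h2]; exact h1
  have hDintInt : Integrable (fun ω => ∫ s in Set.Ioc (0:ℝ) t, D (ω, s))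
      (volume.restrict (Set.Ioi (0:ℝ))) := by
    have h1 := hDprod.integral_norm_prod_left
    refine h1.congr (Eventually.of_forall fun ω => ?_)
    exact integral_congr_ae (Eventually.of_forall fun s => Real.norm_of_nonneg (hDnn _))
  have hbound : ∀ ω : ℝ, ‖Φ ω‖ ≤ ∫ s in Set.Ioc (0:ℝ) t, D (ω, s) := by
    intro ω
    show ‖∫ s in (0:ℝ)..t, H (ω, s)‖ ≤ _
    rw [intervalIntegral.integral_of_le ht.le]
    refine norm_integral_le_of_norm_le (hDsec ω) ?_
    filter_upwards [ae_restrict_mem measurableSet_Ioc] with s hs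
    exact hHD ω ⟨hs.1.le, hs.2⟩
  have hΦint : IntegrableOn Φ (Set.Ioi (0:ℝ)) :=
    Integrable.mono' hDintInt hΦc.aestronglyMeasurable (Eventually.of_forall hbound)
  refine ⟨hΦeq ▸ hΦint, conj2, ?_⟩
  have hIeq : (∫ ω in Set.Ioi (0:ℝ), ∫ s in (0 : ℝ)..t,
      Real.cos (ω * z) • matAct (exp ((t - s) • (A - ω ^ 2 • B))) (matAct B (g s)))
      = ∫ ω in Set.Ioi (0:ℝ), Φ ω := by rw [hΦeq]
  rw [hIeq]
  have hRHSeq : (∫ s in (0 : ℝ)..t, ‖g s‖ * Real.exp (logNorm A * (t - s)) / Real.sqrt (t - s))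
      = ∫ s in Set.Ioc (0:ℝ) t, K s / Real.sqrt (t - s) := by
    rw [intervalIntegral.integral_of_le ht.le]
    refine setIntegral_congr_fun measurableSet_Ioc fun s hs => ?_
    simp only [hKdef, hGg s hs.1.le]
  rw [hRHSeq]
  calc ‖∫ ω in Set.Ioi (0:ℝ), Φ ω‖
      ≤ ∫ ω in Set.Ioi (0:ℝ), ‖Φ ω‖ := norm_integral_le_integral_norm _
    _ ≤ ∫ ω in Set.Ioi (0:ℝ), ∫ s in Set.Ioc (0:ℝ) t, D (ω, s) :=
        integral_mono hΦint.norm hDintInt hbound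
    _ = ∫ s in Set.Ioc (0:ℝ) t, ∫ ω in Set.Ioi (0:ℝ), D (ω, s) :=
        integral_integral_swap hDprod
    _ = ∫ s in Set.Ioc (0:ℝ) t,
        Real.sqrt Real.pi * matOpNorm B / (2 * Real.sqrt b) * (K s / Real.sqrt (t - s)) :=
        setIntegral_congr_fun measurableSet_Ioc fun s hs => heq s hs
    _ = Real.sqrt Real.pi * matOpNorm B / (2 * Real.sqrt b) *
        ∫ s in Set.Ioc (0:ℝ) t, K s / Real.sqrt (t - s) := integral_const_mul _ _
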